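/- arXiv:2010.03355 — 10 statements merged into one kernel-verified Lean document; each statement's English description precedes it below -/
import Mathlib

section
/- Let λ₀ ≤ 0 ≤ λ₁ be real numbers with λ₀ ≠ λ₁ and a < b. Define f(t) = Φ(t - b)/Φ(a - b) + Φ(t - a)/Φ(b - a) with Φ = Φ_{(λ₀,λ₁)}. Then f(t) ≤ 1 for all t ∈ [a, b]. -/
/-!
Regrouped by exponentials, `f (a + u) = p e^{λ₁ u} + q e^{λ₀ u}` with
`p = (1 - e^{λ₀ (b - a)}) / (e^{λ₁ (b - a)} - e^{λ₀ (b - a)})` and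
`q = (e^{λ₁ (b - a)} - 1) / (e^{λ₁ (b - a)} - e^{λ₀ (b - a)})`, both nonnegative because
`λ₀ ≤ 0 ≤ λ₁`. So `f` is convex, and a convex function is bounded on `[a, b]` by its endpoint
values `f a = f b = 1`.
-/

open Real Set

noncomputable def expDividedDiff (l0 l1 t : ℝ) : ℝ :=
  (exp (l1 * t) - exp (l0 * t)) / (l1 - l0)

lemma convexOn_exp_mul (l : ℝ) : ConvexOn ℝ univ fun u => exp (l * u) :=
  convexOn_exp.comp_linearMap (LinearMap.mul ℝ ℝ l)

lemma convexOn_mul_exp_add_mul_exp {p q l0 l1 : ℝ} (hp : 0 ≤ p) (hq : 0 ≤ q) :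
    ConvexOn ℝ univ fun u => p * exp (l1 * u) + q * exp (l0 * u) :=
  ((convexOn_exp_mul l1).smul hp).add ((convexOn_exp_mul l0).smul hq)

lemma expDividedDiff_sub_div_add_div {l0 l1 s : ℝ} (hl : l0 ≠ l1) (hs : s ≠ 0) (u : ℝ) :
    expDividedDiff l0 l1 (u - s) / expDividedDiff l0 l1 (-s) +
        expDividedDiff l0 l1 u / expDividedDiff l0 l1 s =
      (1 - exp (l0 * s)) / (exp (l1 * s) - exp (l0 * s)) * exp (l1 * u) +
        (exp (l1 * s) - 1) / (exp (l1 * s) - exp (l0 * s)) * exp (l0 * u) := by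
  have hAB : exp (l1 * s) - exp (l0 * s) ≠ 0 := by
    rw [sub_ne_zero, Ne, exp_eq_exp, mul_left_inj' hs]
    exact hl.symm
  have hl' : l1 - l0 ≠ 0 := sub_ne_zero.2 hl.symm
  simp only [expDividedDiff, mul_sub, mul_neg, exp_sub, exp_neg]
  have hA := (exp_pos (l1 * s)).ne'
  have hB := (exp_pos (l0 * s)).ne'
  generalize exp (l1 * s) = A at *
  generalize exp (l0 * s) = B at *
  have hBA : B - A ≠ 0 := by rw [← neg_sub]; exact neg_ne_zero.2 hAB
  field_simp
  ring

theorem stmt_4 (l0 l1 a b : ℝ) (h0 : l0 ≤ 0) (h1 : 0 ≤ l1) (hne : l0 ≠ l1)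
    (hab : a < b) :
    let Φ : ℝ → ℝ := fun t => (Real.exp (l1 * t) - Real.exp (l0 * t)) / (l1 - l0)
    let f : ℝ → ℝ := fun t => Φ (t - b) / Φ (a - b) + Φ (t - a) / Φ (b - a)
    ∀ t ∈ Set.Icc a b, f t ≤ 1 := by
  intro Φ f t ht
  have hs : 0 < b - a := sub_pos.2 hab
  set A := exp (l1 * (b - a))
  set B := exp (l0 * (b - a))
  have hA : 1 ≤ A := one_le_exp (mul_nonneg h1 hs.le)
  have hB : B ≤ 1 := exp_le_one_iff.2 (mul_nonpos_of_nonpos_of_nonneg h0 hs.le)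
  have hBA : B < A := exp_lt_exp.2 <|
    mul_lt_mul_of_pos_right ((h0.trans h1).lt_of_ne hne) hs
  set g := fun u => (1 - B) / (A - B) * exp (l1 * u) + (A - 1) / (A - B) * exp (l0 * u)
  have hfg : f t = g (t - a) := by
    have := expDividedDiff_sub_div_add_div hne hs.ne' (t - a)
    rwa [sub_sub_sub_cancel_right, neg_sub] at this
  have hconv : ConvexOn ℝ univ g := convexOn_mul_exp_add_mul_exp
    (div_nonneg (sub_nonneg.2 hB) (sub_nonneg.2 hBA.le))
    (div_nonneg (sub_nonneg.2 hA) (sub_nonneg.2 hBA.le))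
  have hg0 : g 0 = 1 := by
    change (1 - B) / (A - B) * exp (l1 * 0) + (A - 1) / (A - B) * exp (l0 * 0) = 1
    simp only [mul_zero, exp_zero, mul_one]
    field_simp [(sub_pos.2 hBA).ne']
    ring
  have hgs : g (b - a) = 1 := by
    change (1 - B) / (A - B) * A + (A - 1) / (A - B) * B = 1
    field_simp [(sub_pos.2 hBA).ne']
    ring
  have hmem : t - a ∈ segment ℝ 0 (b - a) := by
    rw [segment_eq_Icc hs.le]
    exact ⟨sub_nonneg.2 ht.1, sub_le_sub_right ht.2 a⟩
  calc f t = g (t - a) := hfg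
    _ ≤ max (g 0) (g (b - a)) := hconv.le_on_segment (mem_univ _) (mem_univ _) hmem
    _ = 1 := by rw [hg0, hgs, max_self]
end

section
/- Let ξ > 0 and a < b. Define f(t) = (1/ξ²)·(1 - sinh(ξ(t-a))/sinh(ξ(b-a)) + sinh(ξ(t-b))/sinh(ξ(b-a))). Then f(a) = f(b) = 0, f''(t) - ξ² f(t) = -1 on [a,b], and 0 ≤ f(t) ≤ (1/2)(t-a)(b-t) ≤ (1/8)(b-a)² for all t ∈ [a,b]. -/
/-!
Writing `u = ξ (t - a)` and `v = ξ (b - t)`, so that `u + v = ξ (b - a)`, the addition formula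
for `sinh` gives `ξ² f(t) = (sinh (u + v) - sinh u - sinh v) / sinh (u + v)`, which vanishes at
`u = 0` and at `v = 0`. The numerator equals `sinh u (cosh v - 1) + sinh v (cosh u - 1)`, hence is
nonnegative, and the elementary bounds `sinh x ≤ x cosh x` and `cosh x - 1 ≤ (x / 2) sinh x`
for `x ≥ 0` bound it by `(u v / 2) sinh (u + v)`, i.e. `f(t) ≤ (t - a)(b - t) / 2`.
-/

open Real Set

namespace Real

theorem mul_sinh_nonneg (x : ℝ) : 0 ≤ x * sinh x := by
  rcases le_total 0 x with hx | hx
  · exact mul_nonneg hx (sinh_nonneg_iff.mpr hx)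
  · exact mul_nonneg_of_nonpos_of_nonpos hx (sinh_nonpos_iff.mpr hx)

theorem sinh_le_mul_cosh {x : ℝ} (hx : 0 ≤ x) : sinh x ≤ x * cosh x := by
  have hderiv : ∀ y, HasDerivAt (fun z => z * cosh z - sinh z) (y * sinh y) y := fun y =>
    (((hasDerivAt_id y).mul (hasDerivAt_cosh y)).sub (hasDerivAt_sinh y)).congr_deriv
      (by simp only [id_eq]; ring)
  have hmono : Monotone fun z => z * cosh z - sinh z :=
    monotone_of_hasDerivAt_nonneg hderiv mul_sinh_nonneg
  simpa using hmono hx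

-- Half-angle form of `sinh_le_mul_cosh`: `cosh x - 1 = 2 sinh² (x/2)`, `sinh x = 2 sinh (x/2) cosh (x/2)`.
theorem cosh_sub_one_le_mul_sinh {x : ℝ} (hx : 0 ≤ x) : cosh x - 1 ≤ x / 2 * sinh x := by
  have hhalf : 0 ≤ x / 2 := by positivity
  have hs : 0 ≤ sinh (x / 2) := sinh_nonneg_iff.mpr hhalf
  have hx2 : x = 2 * (x / 2) := by ring
  rw [hx2, cosh_two_mul, sinh_two_mul, cosh_sq, ← hx2]
  nlinarith [mul_le_mul_of_nonneg_left (sinh_le_mul_cosh hhalf) hs]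

theorem sinh_add_sinh_le_sinh_add {u v : ℝ} (hu : 0 ≤ u) (hv : 0 ≤ v) :
    sinh u + sinh v ≤ sinh (u + v) := by
  have hsu := sinh_nonneg_iff.mpr hu
  have hsv := sinh_nonneg_iff.mpr hv
  rw [sinh_add]
  nlinarith [one_le_cosh u, one_le_cosh v]

theorem sinh_add_sub_sinh_sub_sinh_le {u v : ℝ} (hu : 0 ≤ u) (hv : 0 ≤ v) :
    sinh (u + v) - sinh u - sinh v ≤ u * v / 2 * sinh (u + v) := by
  have hsu := sinh_nonneg_iff.mpr hu
  have hsv := sinh_nonneg_iff.mpr hv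
  have hcu : 0 ≤ cosh u - 1 := by linarith [one_le_cosh u]
  have hcv : 0 ≤ cosh v - 1 := by linarith [one_le_cosh v]
  calc sinh (u + v) - sinh u - sinh v = sinh u * (cosh v - 1) + sinh v * (cosh u - 1) := by
        rw [sinh_add]; ring
    _ ≤ u * cosh u * (v / 2 * sinh v) + v * cosh v * (u / 2 * sinh u) := by
        gcongr
        exacts [sinh_le_mul_cosh hu, cosh_sub_one_le_mul_sinh hv, sinh_le_mul_cosh hv,
          cosh_sub_one_le_mul_sinh hu]
    _ = u * v / 2 * sinh (u + v) := by rw [sinh_add]; ring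

end Real

theorem hasDerivAt_sinh_mul_sub (ξ c t : ℝ) :
    HasDerivAt (fun t => sinh (ξ * (t - c))) (ξ * cosh (ξ * (t - c))) t := by
  simpa [mul_comm] using (((hasDerivAt_id t).sub_const c).const_mul ξ).sinh

theorem hasDerivAt_cosh_mul_sub (ξ c t : ℝ) :
    HasDerivAt (fun t => cosh (ξ * (t - c))) (ξ * sinh (ξ * (t - c))) t := by
  simpa [mul_comm] using (((hasDerivAt_id t).sub_const c).const_mul ξ).cosh

theorem deriv_deriv_const_add_sinh_add_sinh (p q r ξ a b t : ℝ) :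
    deriv (deriv fun t => p + q * sinh (ξ * (t - a)) + r * sinh (ξ * (t - b))) t =
      ξ ^ 2 * (q * sinh (ξ * (t - a)) + r * sinh (ξ * (t - b))) := by
  have hderiv : deriv (fun t => p + q * sinh (ξ * (t - a)) + r * sinh (ξ * (t - b))) =
      fun t => q * (ξ * cosh (ξ * (t - a))) + r * (ξ * cosh (ξ * (t - b))) := by
    funext t
    exact ((((hasDerivAt_sinh_mul_sub ξ a t).const_mul q).const_add p).add
      ((hasDerivAt_sinh_mul_sub ξ b t).const_mul r)).deriv
  rw [hderiv]
  refine ((((hasDerivAt_cosh_mul_sub ξ a t).const_mul ξ).const_mul q).add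
    (((hasDerivAt_cosh_mul_sub ξ b t).const_mul ξ).const_mul r)).deriv.trans ?_
  ring

theorem stmt_5 (ξ a b : ℝ) (hξ : 0 < ξ) (hab : a < b) :
    let f : ℝ → ℝ := fun t => (1 / ξ ^ 2) *
      (1 - Real.sinh (ξ * (t - a)) / Real.sinh (ξ * (b - a))
         + Real.sinh (ξ * (t - b)) / Real.sinh (ξ * (b - a)))
    f a = 0 ∧ f b = 0 ∧
    (∀ t ∈ Set.Icc a b, deriv (deriv f) t - ξ ^ 2 * f t = -1) ∧
    (∀ t ∈ Set.Icc a b,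
      0 ≤ f t ∧ f t ≤ (1 / 2) * (t - a) * (b - t) ∧
      (1 / 2) * (t - a) * (b - t) ≤ (1 / 8) * (b - a) ^ 2) := by
  intro f
  have hS : 0 < sinh (ξ * (b - a)) := sinh_pos_iff.mpr (mul_pos hξ (sub_pos.mpr hab))
  have hf : ∀ t, f t = (sinh (ξ * (t - a) + ξ * (b - t)) - sinh (ξ * (t - a)) - sinh (ξ * (b - t)))
      / (ξ ^ 2 * sinh (ξ * (t - a) + ξ * (b - t))) := fun t => by
    simp only [f]
    rw [show ξ * (t - a) + ξ * (b - t) = ξ * (b - a) by ring,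
      show ξ * (b - t) = -(ξ * (t - b)) by ring, sinh_neg]
    field_simp
    ring
  have hcomb : (fun t => 1 / ξ ^ 2 + -(1 / ξ ^ 2 / sinh (ξ * (b - a))) * sinh (ξ * (t - a))
      + 1 / ξ ^ 2 / sinh (ξ * (b - a)) * sinh (ξ * (t - b))) = f := by
    funext t
    simp only [f]
    ring
  refine ⟨by simp [hf], by simp [hf], fun t _ => ?_, fun t ⟨hta, htb⟩ => ?_⟩
  · rw [← hcomb, deriv_deriv_const_add_sinh_add_sinh]
    field_simp
    ring
  have hu : 0 ≤ ξ * (t - a) := mul_nonneg hξ.le (sub_nonneg.mpr hta)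
  have hv : 0 ≤ ξ * (b - t) := mul_nonneg hξ.le (sub_nonneg.mpr htb)
  have hS' : 0 < sinh (ξ * (t - a) + ξ * (b - t)) := by rwa [← mul_add, sub_add_sub_cancel']
  refine ⟨?_, ?_, by nlinarith [four_mul_le_sq_add (t - a) (b - t)]⟩
  · rw [hf]
    exact div_nonneg (by linarith [sinh_add_sinh_le_sinh_add hu hv]) (by positivity)
  · rw [hf, div_le_iff₀ (by positivity)]
    calc _ ≤ ξ * (t - a) * (ξ * (b - t)) / 2 * sinh (ξ * (t - a) + ξ * (b - t)) :=
          sinh_add_sub_sinh_sub_sinh_le hu hv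
      _ = _ := by field_simp
end

section
/- Let ξ > 0 and a < b. Define f(t) = (1/ξ²)·(1 - sinh(ξ(t-a))/sinh(ξ(b-a)) + sinh(ξ(t-b))/sinh(ξ(b-a))). Then the maximum of f on [a,b] is attained at t* = (a+b)/2 and equals (b-a)² · M*(ξ(b-a)), where M*(x) = (sinh x - 2 sinh(x/2))/(x² sinh x). -/
/-! With m the midpoint and h = (b - a) / 2, the addition formula gives
sinh (ξ (t - a)) - sinh (ξ (t - b)) = 2 cosh (ξ (t - m)) sinh (ξ h), and the double-angle formula
sinh (2 ξ h) = 2 sinh (ξ h) cosh (ξ h), so f t = ξ⁻² (1 - cosh (ξ (t - m)) / cosh (ξ h)).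
As cosh is smallest at 0, f is largest at t = m, where the same double-angle formula turns
ξ⁻² (1 - 1 / cosh (ξ h)) into (b - a)² M*(ξ (b - a)). -/

open Real Set

noncomputable def omegaProfile (ξ a b t : ℝ) : ℝ :=
  (1 / ξ ^ 2) * (1 - sinh (ξ * (t - a)) / sinh (ξ * (b - a))
    + sinh (ξ * (t - b)) / sinh (ξ * (b - a)))

noncomputable def mStar (x : ℝ) : ℝ :=
  (sinh x - 2 * sinh (x / 2)) / (x ^ 2 * sinh x)

lemma Real.sinh_eq_two_mul_sinh_half_mul_cosh_half (x : ℝ) :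
    sinh x = 2 * sinh (x / 2) * cosh (x / 2) := by
  rw [← sinh_two_mul, mul_div_cancel₀ x two_ne_zero]

lemma mStar_eq (x : ℝ) : mStar x = (1 - (cosh (x / 2))⁻¹) / x ^ 2 := by
  rcases eq_or_ne x 0 with rfl | hx
  · simp [mStar]
  have hs : sinh (x / 2) ≠ 0 := sinh_ne_zero.2 (div_ne_zero hx two_ne_zero)
  have hc : cosh (x / 2) ≠ 0 := (cosh_pos _).ne'
  rw [mStar, sinh_eq_two_mul_sinh_half_mul_cosh_half x]
  field_simp

lemma omegaProfile_eq (ξ : ℝ) {a b : ℝ} (hab : a ≠ b) (t : ℝ) :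
    omegaProfile ξ a b t =
      (1 - cosh (ξ * (t - (a + b) / 2)) / cosh (ξ * (b - a) / 2)) / ξ ^ 2 := by
  rcases eq_or_ne ξ 0 with rfl | hξ
  · simp [omegaProfile]
  have hs : sinh (ξ * (b - a) / 2) ≠ 0 :=
    sinh_ne_zero.2 (div_ne_zero (mul_ne_zero hξ (sub_ne_zero.2 hab.symm)) two_ne_zero)
  have hc : cosh (ξ * (b - a) / 2) ≠ 0 := (cosh_pos _).ne'
  have hta : ξ * (t - a) = ξ * (t - (a + b) / 2) + ξ * (b - a) / 2 := by ring
  have htb : ξ * (t - b) = ξ * (t - (a + b) / 2) - ξ * (b - a) / 2 := by ring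
  rw [omegaProfile, hta, htb, sinh_add, sinh_sub,
    sinh_eq_two_mul_sinh_half_mul_cosh_half (ξ * (b - a))]
  field_simp
  ring

lemma omegaProfile_midpoint (ξ : ℝ) {a b : ℝ} (hab : a ≠ b) :
    omegaProfile ξ a b ((a + b) / 2) = (b - a) ^ 2 * mStar (ξ * (b - a)) := by
  have hba : (b - a) ^ 2 ≠ 0 := pow_ne_zero 2 (sub_ne_zero.2 hab.symm)
  rw [omegaProfile_eq ξ hab, mStar_eq, sub_self, mul_zero, cosh_zero, one_div, mul_pow,
    mul_comm (ξ ^ 2), ← div_div, mul_div_assoc', mul_div_cancel₀ _ hba]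

lemma omegaProfile_le_midpoint (ξ : ℝ) {a b : ℝ} (hab : a ≠ b) (t : ℝ) :
    omegaProfile ξ a b t ≤ omegaProfile ξ a b ((a + b) / 2) := by
  rw [omegaProfile_eq ξ hab, omegaProfile_eq ξ hab, sub_self, mul_zero, cosh_zero]
  have hc := cosh_pos (ξ * (b - a) / 2)
  gcongr
  exact one_le_cosh _

theorem stmt_6_general (ξ a b : ℝ) (hab : a < b) :
    let f : ℝ → ℝ := fun t => (1 / ξ ^ 2) *
      (1 - Real.sinh (ξ * (t - a)) / Real.sinh (ξ * (b - a))
         + Real.sinh (ξ * (t - b)) / Real.sinh (ξ * (b - a)))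
    let Mstar : ℝ → ℝ := fun x =>
      (Real.sinh x - 2 * Real.sinh (x / 2)) / (x ^ 2 * Real.sinh x)
    f ((a + b) / 2) = (b - a) ^ 2 * Mstar (ξ * (b - a)) ∧
    ∀ t ∈ Set.Icc a b, f t ≤ f ((a + b) / 2) :=
  ⟨omegaProfile_midpoint ξ hab.ne, fun t _ => omegaProfile_le_midpoint ξ hab.ne t⟩

theorem stmt_6 (ξ a b : ℝ) (hξ : 0 < ξ) (hab : a < b) :
    let f : ℝ → ℝ := fun t => (1 / ξ ^ 2) *
      (1 - Real.sinh (ξ * (t - a)) / Real.sinh (ξ * (b - a))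
         + Real.sinh (ξ * (t - b)) / Real.sinh (ξ * (b - a)))
    let Mstar : ℝ → ℝ := fun x =>
      (Real.sinh x - 2 * Real.sinh (x / 2)) / (x ^ 2 * Real.sinh x)
    f ((a + b) / 2) = (b - a) ^ 2 * Mstar (ξ * (b - a)) ∧
    ∀ t ∈ Set.Icc a b, f t ≤ f ((a + b) / 2) :=
  stmt_6_general ξ a b hab
end

section
/- For all x > 0, the inequality (1/2)·(sinh x - 2 sinh(x/2))/(x · sinh²(x/2)) ≤ 1/4 holds. -/
open Real

/-! By the double-angle formulas the left-hand side equals `tanh (x / 4) / x`, and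
`tanh v ≤ v` for `v ≥ 0` because, by the mean value theorem, `sinh v = v * cosh ξ` for some
`ξ ∈ (0, v)`. -/

theorem Real.sinh_le_mul_cosh_s7 {x : ℝ} (hx : 0 ≤ x) : sinh x ≤ x * cosh x := by
  rcases hx.eq_or_lt with rfl | hx
  · simp
  obtain ⟨c, ⟨hc0, hcx⟩, hc⟩ := exists_deriv_eq_slope sinh hx continuous_sinh.continuousOn
    differentiable_sinh.differentiableOn
  rw [Real.deriv_sinh, sinh_zero, sub_zero, sub_zero] at hc
  rw [← div_le_iff₀' hx, ← hc, cosh_le_cosh, abs_of_pos hc0, abs_of_pos hx]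
  exact hcx.le

theorem Real.tanh_le_self {x : ℝ} (hx : 0 ≤ x) : tanh x ≤ x := by
  rw [tanh_eq_sinh_div_cosh, div_le_iff₀ (cosh_pos x)]
  exact sinh_le_mul_cosh_s7 hx

theorem Real.sinh_sub_two_mul_sinh_half_div (x : ℝ) :
    (sinh x - 2 * sinh (x / 2)) / (2 * sinh (x / 2) ^ 2) = tanh (x / 4) := by
  obtain ⟨v, rfl⟩ : ∃ v, x = 4 * v := ⟨x / 4, by ring⟩
  have h2 : 4 * v / 2 = 2 * v := by ring
  have h4 : 4 * v = 2 * (2 * v) := by ring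
  rw [h2, mul_div_cancel_left₀ v four_ne_zero, h4, sinh_two_mul (2 * v), sinh_two_mul,
    cosh_two_mul, tanh_eq_sinh_div_cosh]
  rcases eq_or_ne (sinh v) 0 with hs | hs
  · simp [hs]
  field_simp
  linear_combination cosh_sq_sub_sinh_sq v

theorem stmt_7 (x : ℝ) (hx : 0 < x) :
    (1 / 2) * (Real.sinh x - 2 * Real.sinh (x / 2)) / (x * Real.sinh (x / 2) ^ 2)
      ≤ 1 / 4 := by
  calc (1 / 2) * (sinh x - 2 * sinh (x / 2)) / (x * sinh (x / 2) ^ 2)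
      = tanh (x / 4) / x := by
        rw [← sinh_sub_two_mul_sinh_half_div]; field_simp
    _ ≤ (x / 4) / x := by gcongr; exact tanh_le_self (by positivity)
    _ = 1 / 4 := by field_simp
end

section
/- Let g ∈ C²[a,b] satisfy g(a) = g(b) = 0, and let λ₀ ≤ λ₁ be real. Then for all t ∈ [a,b], |g(t)| ≤ M · max_{θ ∈ [a,b]} |g''(θ) - (λ₀+λ₁)g'(θ) + λ₀λ₁ g(θ)|, where M = max_{t ∈ [a,b]} Ω(t) and Ω is the unique function with Ω(a) = Ω(b) = 0, Ω'' - (λ₀+λ₁)Ω' + λ₀λ₁Ω = -1. Moreover this constant M is the best possible. -/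
/-!
Write `L = (D - l1)(D - l0)`. If `L h ≤ 0` then `e^{-l1 t} (h' - l0 h)` is antitone, and this
is, up to a positive factor, the derivative of `e^{-l0 t} h`; a function vanishing at `a` and `b`
whose derivative changes sign at most once, from `+` to `-`, is nonnegative. This maximum
principle applied to `K Ω ± g`, where `|L g| ≤ K`, gives `|g| ≤ K Ω ≤ K M`; the bound is attained
by `g = Ω`, `K = 1`.
-/

open Real Set

/-- The operator `L_{(l0,l1)}`, with derivatives taken within `s`. -/
noncomputable def diffOp (l0 l1 : ℝ) (s : Set ℝ) (g : ℝ → ℝ) (t : ℝ) : ℝ :=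
  iteratedDerivWithin 2 g s t - (l0 + l1) * derivWithin g s t + l0 * l1 * g t

section DiffOp

variable {l0 l1 : ℝ} {s : Set ℝ} {f g : ℝ → ℝ} {t : ℝ}

lemma diffOp_add (hs : UniqueDiffOn ℝ s) (ht : t ∈ s)
    (hf : ContDiffOn ℝ 2 f s) (hg : ContDiffOn ℝ 2 g s) :
    diffOp l0 l1 s (fun x => f x + g x) t = diffOp l0 l1 s f t + diffOp l0 l1 s g t := by
  have hd : derivWithin (fun x => f x + g x) s t = derivWithin f s t + derivWithin g s t :=
    derivWithin_fun_add (hf.differentiableOn two_ne_zero t ht)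
      (hg.differentiableOn two_ne_zero t ht)
  simp only [diffOp, iteratedDerivWithin_fun_add ht hs (hf t ht) (hg t ht), hd]
  ring

lemma diffOp_const_mul (hs : UniqueDiffOn ℝ s) (ht : t ∈ s) (hg : ContDiffOn ℝ 2 g s) (c : ℝ) :
    diffOp l0 l1 s (fun x => c * g x) t = c * diffOp l0 l1 s g t := by
  simp only [diffOp, iteratedDerivWithin_const_mul ht hs c (hg t ht),
    derivWithin_const_mul c (hg.differentiableOn two_ne_zero t ht)]
  ring

lemma diffOp_neg : diffOp l0 l1 s (fun x => -g x) t = -diffOp l0 l1 s g t := by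
  simp only [diffOp, iteratedDerivWithin_fun_neg, derivWithin.fun_neg]
  ring

end DiffOp

lemma nonneg_of_hasDerivAt_eq_pos_mul_antitoneOn {a b : ℝ} {w e u : ℝ → ℝ}
    (hw : ContinuousOn w (Icc a b)) (hwa : w a = 0) (hwb : w b = 0)
    (hderiv : ∀ x ∈ Ioo a b, HasDerivAt w (e x * u x) x) (he : ∀ x ∈ Ioo a b, 0 < e x)
    (hu : AntitoneOn u (Ioo a b)) :
    ∀ t ∈ Icc a b, 0 ≤ w t := by
  intro t ht
  by_contra! hwt
  have hat : a < t := ht.1.lt_of_ne (by rintro rfl; linarith)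
  have htb : t < b := ht.2.lt_of_ne (by rintro rfl; linarith)
  obtain ⟨c₁, hc₁, hslope₁⟩ := exists_hasDerivAt_eq_slope w (fun x => e x * u x) hat
    (hw.mono (Icc_subset_Icc_right htb.le))
    fun x hx => hderiv x (Ioo_subset_Ioo_right htb.le hx)
  obtain ⟨c₂, hc₂, hslope₂⟩ := exists_hasDerivAt_eq_slope w (fun x => e x * u x) htb
    (hw.mono (Icc_subset_Icc_left hat.le))
    fun x hx => hderiv x (Ioo_subset_Ioo_left hat.le hx)
  have hc₁' : c₁ ∈ Ioo a b := ⟨hc₁.1, hc₁.2.trans htb⟩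
  have hc₂' : c₂ ∈ Ioo a b := ⟨hat.trans hc₂.1, hc₂.2⟩
  have hu₁ : u c₁ < 0 := by
    have : e c₁ * u c₁ < 0 := by
      rw [hslope₁, hwa]
      exact div_neg_of_neg_of_pos (by linarith) (by linarith)
    exact neg_of_mul_neg_right this (he c₁ hc₁').le
  have hu₂ : 0 < u c₂ := by
    have : 0 < e c₂ * u c₂ := by
      rw [hslope₂, hwb]
      exact div_pos (by linarith) (by linarith)
    exact pos_of_mul_pos_right this (he c₂ hc₂').le
  linarith [hu hc₁' hc₂' (hc₁.2.trans hc₂.1).le]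

section MaximumPrinciple

variable {a b l0 l1 : ℝ} {g : ℝ → ℝ}

lemma hasDerivAt_of_contDiffOn_Icc (hg : ContDiffOn ℝ 2 g (Icc a b)) {x : ℝ} (hx : x ∈ Ioo a b) :
    HasDerivAt g (derivWithin g (Icc a b) x) x ∧
      HasDerivAt (derivWithin g (Icc a b)) (iteratedDerivWithin 2 g (Icc a b) x) x := by
  have hs : UniqueDiffOn ℝ (Icc a b) := uniqueDiffOn_Icc (hx.1.trans hx.2)
  have hmem : Icc a b ∈ nhds x := Icc_mem_nhds hx.1 hx.2
  have hxs : x ∈ Icc a b := Ioo_subset_Icc_self hx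
  rw [iteratedDerivWithin_succ', iteratedDerivWithin_one]
  exact ⟨(hg.differentiableOn two_ne_zero x hxs).hasDerivWithinAt.hasDerivAt hmem,
    ((hg.derivWithin hs le_rfl).differentiableOn one_ne_zero x hxs).hasDerivWithinAt.hasDerivAt
      hmem⟩

/-- The derivative of `e^{-l1 t} (g' - l0 g)` is `e^{-l1 t} L g`. -/
lemma antitoneOn_exp_mul_of_diffOp_nonpos (hab : a < b) (hg : ContDiffOn ℝ 2 g (Icc a b))
    (hL : ∀ t ∈ Ioo a b, diffOp l0 l1 (Icc a b) g t ≤ 0) :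
    AntitoneOn (fun t => exp (-l1 * t) * (derivWithin g (Icc a b) t - l0 * g t)) (Icc a b) := by
  have hcont : ContinuousOn (derivWithin g (Icc a b)) (Icc a b) :=
    (hg.derivWithin (m := 1) (uniqueDiffOn_Icc hab) le_rfl).continuousOn
  refine antitoneOn_of_hasDerivWithinAt_nonpos (convex_Icc a b)
    ((continuous_exp.comp (continuous_const_mul (-l1))).continuousOn.mul
      (hcont.sub (continuousOn_const.mul hg.continuousOn))) (f' := fun x =>
      exp (-l1 * x) * diffOp l0 l1 (Icc a b) g x) (fun x hx => ?_) fun x hx => ?_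
  · rw [interior_Icc] at hx
    obtain ⟨hg', hg''⟩ := hasDerivAt_of_contDiffOn_Icc hg hx
    have hexp : HasDerivAt (fun t => exp (-l1 * t)) (exp (-l1 * x) * -l1) x := by
      simpa using ((hasDerivAt_id x).const_mul (-l1)).exp
    refine ((hexp.fun_mul (hg''.fun_sub (hg'.const_mul l0))).congr_deriv ?_).hasDerivWithinAt
    simp only [diffOp]
    ring
  · rw [interior_Icc] at hx
    exact mul_nonpos_of_nonneg_of_nonpos (exp_pos _).le (hL x hx)

/-- `e^{-l0 t} g` has derivative `e^{(l1 - l0) t} · e^{-l1 t} (g' - l0 g)`, whose second factor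
is antitone. -/
theorem nonneg_of_diffOp_nonpos (hab : a < b)
    (hg : ContDiffOn ℝ 2 g (Icc a b)) (hga : g a = 0) (hgb : g b = 0)
    (hL : ∀ t ∈ Icc a b, diffOp l0 l1 (Icc a b) g t ≤ 0) :
    ∀ t ∈ Icc a b, 0 ≤ g t := by
  have hw := nonneg_of_hasDerivAt_eq_pos_mul_antitoneOn (w := fun t => exp (-l0 * t) * g t)
    (e := fun t => exp ((l1 - l0) * t))
    ((continuous_exp.comp (continuous_const_mul (-l0))).continuousOn.mul hg.continuousOn)
    (by simp [hga]) (by simp [hgb]) (fun x hx => ?_) (fun x _ => exp_pos _)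
    ((antitoneOn_exp_mul_of_diffOp_nonpos hab hg fun t ht => hL t (Ioo_subset_Icc_self ht)).mono
      Ioo_subset_Icc_self)
  · exact fun t ht => nonneg_of_mul_nonneg_right (hw t ht) (exp_pos _)
  · have hexp : HasDerivAt (fun t => exp (-l0 * t)) (exp (-l0 * x) * -l0) x := by
      simpa using ((hasDerivAt_id x).const_mul (-l0)).exp
    refine (hexp.fun_mul (hasDerivAt_of_contDiffOn_Icc hg hx).1).congr_deriv ?_
    rw [← mul_assoc, ← exp_add]
    ring_nf

end MaximumPrinciple

lemma abs_le_mul_of_abs_diffOp_le {a b l0 l1 K : ℝ} {g Ω : ℝ → ℝ} (hab : a < b)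
    (hΩ : ContDiffOn ℝ 2 Ω (Icc a b)) (hΩa : Ω a = 0) (hΩb : Ω b = 0)
    (hΩode : ∀ t ∈ Icc a b, diffOp l0 l1 (Icc a b) Ω t = -1)
    (hg : ContDiffOn ℝ 2 g (Icc a b)) (hga : g a = 0) (hgb : g b = 0)
    (hK : ∀ t ∈ Icc a b, |diffOp l0 l1 (Icc a b) g t| ≤ K) :
    ∀ t ∈ Icc a b, |g t| ≤ K * Ω t := by
  have hs : UniqueDiffOn ℝ (Icc a b) := uniqueDiffOn_Icc hab
  have comparison : ∀ f : ℝ → ℝ, ContDiffOn ℝ 2 f (Icc a b) → f a = 0 → f b = 0 →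
      (∀ t ∈ Icc a b, |diffOp l0 l1 (Icc a b) f t| ≤ K) → ∀ t ∈ Icc a b, -(K * Ω t) ≤ f t := by
    intro f hf hfa hfb hfK
    have hKΩ : ContDiffOn ℝ 2 (fun t => K * Ω t) (Icc a b) := contDiffOn_const.mul hΩ
    have := nonneg_of_diffOp_nonpos (l0 := l0) (l1 := l1) hab (hKΩ.add hf)
      (by simp [hΩa, hfa]) (by simp [hΩb, hfb]) fun t ht => by
        rw [diffOp_add hs ht hKΩ hf, diffOp_const_mul hs ht hΩ, hΩode t ht]
        linarith [(abs_le.1 (hfK t ht)).2]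
    exact fun t ht => by linarith [this t ht]
  intro t ht
  refine abs_le.2 ⟨comparison g hg hga hgb hK t ht, ?_⟩
  have := comparison (fun x => -g x) hg.neg (by simp [hga]) (by simp [hgb])
    (fun x hx => by rw [diffOp_neg, abs_neg]; exact hK x hx) t ht
  linarith

theorem stmt_8_general (a b l0 l1 : ℝ) (hab : a < b)
    (Ω : ℝ → ℝ) (hΩ : ContDiffOn ℝ 2 Ω (Set.Icc a b))
    (hΩa : Ω a = 0) (hΩb : Ω b = 0)
    (hΩode : ∀ t ∈ Set.Icc a b,
      iteratedDerivWithin 2 Ω (Set.Icc a b) t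
        - (l0 + l1) * derivWithin Ω (Set.Icc a b) t + l0 * l1 * Ω t = -1)
    (M : ℝ) (hM : IsGreatest (Ω '' Set.Icc a b) M) :
    (∀ g : ℝ → ℝ, ContDiffOn ℝ 2 g (Set.Icc a b) → g a = 0 → g b = 0 →
      ∀ K : ℝ, (∀ θ ∈ Set.Icc a b,
          |iteratedDerivWithin 2 g (Set.Icc a b) θ
            - (l0 + l1) * derivWithin g (Set.Icc a b) θ + l0 * l1 * g θ| ≤ K) →
      ∀ t ∈ Set.Icc a b, |g t| ≤ M * K) ∧
    (∀ C : ℝ,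
      (∀ g : ℝ → ℝ, ContDiffOn ℝ 2 g (Set.Icc a b) → g a = 0 → g b = 0 →
        ∀ K : ℝ, (∀ θ ∈ Set.Icc a b,
            |iteratedDerivWithin 2 g (Set.Icc a b) θ
              - (l0 + l1) * derivWithin g (Set.Icc a b) θ + l0 * l1 * g θ| ≤ K) →
        ∀ t ∈ Set.Icc a b, |g t| ≤ C * K) → M ≤ C) := by
  refine ⟨fun g hg hga hgb K hK t ht => ?_, fun C hC => ?_⟩
  · have hK0 : 0 ≤ K := (abs_nonneg _).trans (hK a (left_mem_Icc.2 hab.le))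
    calc |g t| ≤ K * Ω t := abs_le_mul_of_abs_diffOp_le hab hΩ hΩa hΩb hΩode hg hga hgb hK t ht
      _ ≤ K * M := mul_le_mul_of_nonneg_left (hM.2 ⟨t, ht, rfl⟩) hK0
      _ = M * K := mul_comm K M
  · obtain ⟨t₀, ht₀, hΩt₀⟩ := hM.1
    have := hC Ω hΩ hΩa hΩb 1 (fun θ hθ => by rw [hΩode θ hθ, abs_neg, abs_one]) t₀ ht₀
    rw [hΩt₀, mul_one] at this
    exact (le_abs_self M).trans this

theorem stmt_8 (a b l0 l1 : ℝ) (hab : a < b) (hl : l0 ≤ l1)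
    (Ω : ℝ → ℝ) (hΩ : ContDiffOn ℝ 2 Ω (Set.Icc a b))
    (hΩa : Ω a = 0) (hΩb : Ω b = 0)
    (hΩode : ∀ t ∈ Set.Icc a b,
      iteratedDerivWithin 2 Ω (Set.Icc a b) t
        - (l0 + l1) * derivWithin Ω (Set.Icc a b) t + l0 * l1 * Ω t = -1)
    (M : ℝ) (hM : IsGreatest (Ω '' Set.Icc a b) M) :
    (∀ g : ℝ → ℝ, ContDiffOn ℝ 2 g (Set.Icc a b) → g a = 0 → g b = 0 →
      ∀ K : ℝ, (∀ θ ∈ Set.Icc a b,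
          |iteratedDerivWithin 2 g (Set.Icc a b) θ
            - (l0 + l1) * derivWithin g (Set.Icc a b) θ + l0 * l1 * g θ| ≤ K) →
      ∀ t ∈ Set.Icc a b, |g t| ≤ M * K) ∧
    (∀ C : ℝ,
      (∀ g : ℝ → ℝ, ContDiffOn ℝ 2 g (Set.Icc a b) → g a = 0 → g b = 0 →
        ∀ K : ℝ, (∀ θ ∈ Set.Icc a b,
            |iteratedDerivWithin 2 g (Set.Icc a b) θ
              - (l0 + l1) * derivWithin g (Set.Icc a b) θ + l0 * l1 * g θ| ≤ K) →
        ∀ t ∈ Set.Icc a b, |g t| ≤ C * K) → M ≤ C) :=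
  stmt_8_general a b l0 l1 hab Ω hΩ hΩa hΩb hΩode M hM
end

section
/- Let ξ ∈ ℝ and let g ∈ C²[a,b] with g(a) = g(b) = 0. Then |g(t)| ≤ (1/8)(b-a)² · max_{θ ∈ [a,b]} |g''(θ) - ξ² g(θ)| for all t ∈ [a,b]. -/
/-!
For `c > K / 2` the barrier `w = c (t - a) (b - t) ± g` is nonnegative at `a` and `b` and
satisfies `w'' - ξ² w < 0` wherever `w < 0`; hence `w'' < 0` there, so `w` has no negative
interior minimum and `|g t| ≤ c (t - a) (b - t)`. Letting `c ↓ K / 2` and using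
`(t - a) (b - t) ≤ (b - a)² / 4` gives the bound.
-/

open Set Filter Topology

theorem IsLocalMin.nonneg_of_hasDerivAt_of_hasDerivAt {f f' : ℝ → ℝ} {x c : ℝ}
    (hmin : IsLocalMin f x) (hf : ∀ᶠ y in 𝓝 x, HasDerivAt f (f' y) y)
    (hf' : HasDerivAt f' c x) : 0 ≤ c := by
  have hderiv : deriv f =ᶠ[𝓝 x] f' := hf.mono fun y hy => hy.deriv
  by_contra! hc
  have hmax : IsLocalMax f x := isLocalMax_of_deriv_deriv_neg
    ((hf'.congr_of_eventuallyEq hderiv).deriv ▸ hc) hmin.deriv_eq_zero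
    hf.self_of_nhds.continuousAt
  have hconst : f =ᶠ[𝓝 x] fun _ => f x :=
    (hmin.and hmax).mono fun y hy => le_antisymm hy.2 hy.1
  have hf'_zero : f' =ᶠ[𝓝 x] fun _ => 0 := by
    filter_upwards [hderiv.symm.trans hconst.deriv] with y hy
    simpa using hy
  exact hc.ne (hf'.unique ((hasDerivAt_const x (0 : ℝ)).congr_of_eventuallyEq hf'_zero))

theorem nonneg_on_Icc_of_second_deriv_neg_of_neg {w w' w'' : ℝ → ℝ} {a b : ℝ}
    (hw : ContinuousOn w (Icc a b))
    (hw' : ∀ x ∈ Ioo a b, HasDerivAt w (w' x) x)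
    (hw'' : ∀ x ∈ Ioo a b, HasDerivAt w' (w'' x) x)
    (ha : 0 ≤ w a) (hb : 0 ≤ w b) (hneg : ∀ x ∈ Ioo a b, w x < 0 → w'' x < 0) :
    ∀ t ∈ Icc a b, 0 ≤ w t := by
  intro t ht
  obtain ⟨m, hm, hmin⟩ := isCompact_Icc.exists_isMinOn ⟨t, ht⟩ hw
  refine (?_ : 0 ≤ w m).trans (hmin ht)
  rcases hm.1.eq_or_lt with rfl | ham
  · exact ha
  rcases hm.2.eq_or_lt with rfl | hmb
  · exact hb
  by_contra! hwm
  have hloc : IsLocalMin w m := hmin.isLocalMin (Icc_mem_nhds ham hmb)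
  have hderiv : ∀ᶠ y in 𝓝 m, HasDerivAt w (w' y) y :=
    eventually_of_mem (Ioo_mem_nhds ham hmb) hw'
  exact (hneg m ⟨ham, hmb⟩ hwm).not_ge
    (hloc.nonneg_of_hasDerivAt_of_hasDerivAt hderiv (hw'' m ⟨ham, hmb⟩))

theorem ContDiffOn.hasDerivAt_derivWithin {f : ℝ → ℝ} {s : Set ℝ} {x : ℝ}
    {n : WithTop ℕ∞} (hf : ContDiffOn ℝ n f s) (hn : n ≠ 0) (hs : s ∈ 𝓝 x) :
    HasDerivAt f (derivWithin f s x) x :=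
  ((hf.differentiableOn hn) x (mem_of_mem_nhds hs)).hasDerivWithinAt.hasDerivAt hs

theorem ContDiffOn.hasDerivAt_derivWithin_iteratedDerivWithin_two {f : ℝ → ℝ} {s : Set ℝ}
    {x : ℝ} (hf : ContDiffOn ℝ 2 f s) (hs : UniqueDiffOn ℝ s) (hx : s ∈ 𝓝 x) :
    HasDerivAt (derivWithin f s) (iteratedDerivWithin 2 f s x) x := by
  rw [iteratedDerivWithin_eq_iterate]
  exact (hf.derivWithin hs (m := 1) (by norm_num)).hasDerivAt_derivWithin one_ne_zero hx

section Barrier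

variable {g g' g'' : ℝ → ℝ} {a b ξ K c : ℝ}

theorem neg_mul_le_of_second_deriv_sub_sq_mul_le (hg : ContinuousOn g (Icc a b))
    (hg' : ∀ x ∈ Ioo a b, HasDerivAt g (g' x) x)
    (hg'' : ∀ x ∈ Ioo a b, HasDerivAt g' (g'' x) x)
    (ha : g a = 0) (hb : g b = 0) (hK : ∀ x ∈ Ioo a b, g'' x - ξ ^ 2 * g x ≤ K)
    (hc₀ : 0 ≤ c) (hc : K < 2 * c) :
    ∀ t ∈ Icc a b, -(c * ((t - a) * (b - t))) ≤ g t := by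
  have hw := nonneg_on_Icc_of_second_deriv_neg_of_neg
    (w := fun x => c * ((x - a) * (b - x)) + g x) (w' := fun x => c * (a + b - 2 * x) + g' x)
    (w'' := fun x => -2 * c + g'' x)
    ((by fun_prop : Continuous fun x => c * ((x - a) * (b - x))).continuousOn.add hg)
    (fun x hx => by
      have hq := (((hasDerivAt_id' x).sub_const a).mul
        ((hasDerivAt_id' x).const_sub b)).const_mul c
      exact (hq.add (hg' x hx)).congr_deriv (by ring))
    (fun x hx => by
      have hq := (((hasDerivAt_id' x).const_mul 2).const_sub (a + b)).const_mul c
      exact (hq.add (hg'' x hx)).congr_deriv (by ring))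
    (by simp [ha]) (by simp [hb])
    (fun x hx hwx => by
      have hq : 0 ≤ c * ((x - a) * (b - x)) :=
        mul_nonneg hc₀ (mul_nonneg (by linarith [hx.1]) (by linarith [hx.2]))
      -- where the barrier is negative, so is `g`, hence `g'' ≤ K + ξ ^ 2 * g < 2 * c`
      have hξg : ξ ^ 2 * g x ≤ 0 := mul_nonpos_of_nonneg_of_nonpos (sq_nonneg ξ) (by linarith)
      linarith [hK x hx])
  intro t ht
  linarith [hw t ht]

theorem abs_le_mul_of_abs_second_deriv_sub_sq_mul_le (hg : ContinuousOn g (Icc a b))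
    (hg' : ∀ x ∈ Ioo a b, HasDerivAt g (g' x) x)
    (hg'' : ∀ x ∈ Ioo a b, HasDerivAt g' (g'' x) x)
    (ha : g a = 0) (hb : g b = 0) (hK : ∀ x ∈ Ioo a b, |g'' x - ξ ^ 2 * g x| ≤ K)
    (hc₀ : 0 ≤ c) (hc : K < 2 * c) :
    ∀ t ∈ Icc a b, |g t| ≤ c * ((t - a) * (b - t)) := by
  intro t ht
  have hlower := neg_mul_le_of_second_deriv_sub_sq_mul_le hg hg' hg'' ha hb
    (fun x hx => (abs_le.1 (hK x hx)).2) hc₀ hc t ht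
  have hupper := neg_mul_le_of_second_deriv_sub_sq_mul_le (g := -g) (g' := -g') (g'' := -g'')
    (ξ := ξ) hg.neg (fun x hx => (hg' x hx).neg) (fun x hx => (hg'' x hx).neg) (by simp [ha])
    (by simp [hb]) (fun x hx => by simp only [Pi.neg_apply]; linarith [abs_le.1 (hK x hx)])
    hc₀ hc t ht
  simp only [Pi.neg_apply] at hupper
  rw [abs_le]
  constructor <;> linarith

theorem abs_le_half_mul_of_abs_second_deriv_sub_sq_mul_le (hg : ContinuousOn g (Icc a b))
    (hg' : ∀ x ∈ Ioo a b, HasDerivAt g (g' x) x)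
    (hg'' : ∀ x ∈ Ioo a b, HasDerivAt g' (g'' x) x)
    (ha : g a = 0) (hb : g b = 0) (hK : ∀ x ∈ Ioo a b, |g'' x - ξ ^ 2 * g x| ≤ K)
    (hK₀ : 0 ≤ K) :
    ∀ t ∈ Icc a b, |g t| ≤ K / 2 * ((t - a) * (b - t)) := by
  intro t ht
  have hlim : Tendsto (fun c => c * ((t - a) * (b - t))) (𝓝[>] (K / 2))
      (𝓝 (K / 2 * ((t - a) * (b - t)))) :=
    ((continuous_mul_const _).tendsto _).mono_left nhdsWithin_le_nhds
  refine ge_of_tendsto hlim (eventually_nhdsWithin_of_forall fun c (hc : K / 2 < c) => ?_)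
  exact abs_le_mul_of_abs_second_deriv_sub_sq_mul_le hg hg' hg'' ha hb hK (by linarith)
    (by linarith) t ht

end Barrier

theorem stmt_9 (ξ a b : ℝ) (hab : a < b)
    (g : ℝ → ℝ) (hg : ContDiffOn ℝ 2 g (Set.Icc a b))
    (hga : g a = 0) (hgb : g b = 0)
    (K : ℝ)
    (hK : ∀ θ ∈ Set.Icc a b,
      |iteratedDerivWithin 2 g (Set.Icc a b) θ - ξ ^ 2 * g θ| ≤ K) :
    ∀ t ∈ Set.Icc a b, |g t| ≤ (1 / 8) * (b - a) ^ 2 * K := by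
  have hK₀ : 0 ≤ K := (abs_nonneg _).trans (hK a (left_mem_Icc.2 hab.le))
  intro t ht
  calc |g t| ≤ K / 2 * ((t - a) * (b - t)) :=
        abs_le_half_mul_of_abs_second_deriv_sub_sq_mul_le hg.continuousOn
          (fun x hx => hg.hasDerivAt_derivWithin two_ne_zero (Icc_mem_nhds hx.1 hx.2))
          (fun x hx => hg.hasDerivAt_derivWithin_iteratedDerivWithin_two (uniqueDiffOn_Icc hab)
            (Icc_mem_nhds hx.1 hx.2))
          hga hgb (fun x hx => hK x (Ioo_subset_Icc_self hx)) hK₀ t ht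
    _ ≤ K / 2 * ((b - a) ^ 2 / 4) := by
        gcongr
        nlinarith [sq_nonneg (2 * t - a - b)]
    _ = 1 / 8 * (b - a) ^ 2 * K := by ring
end

section
/- For λ₀ < 0 < λ₁ the Green function on the diagonal satisfies G^{a,b}_{(λ₀,λ₁)}(t,t) = Φ_{(λ₀,λ₁)}(t-b)·Φ_{(-λ₀,-λ₁)}(t-a)/Φ_{(-λ₀,-λ₁)}(b-a), and the function F(t) = Φ_{(λ₀,λ₁)}(t-b)·Φ_{(-λ₀,-λ₁)}(t-a) satisfies D_{(λ₀-λ₁)}D_{(λ₁-λ₀)}F = e^{λ₁(a-b)} + e^{λ₀(a-b)} (a constant), where D_λ f = f' - λf. -/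
open Real

/-- The operator `D_λ f = f' - λ f`. -/
noncomputable def Dop (μ : ℝ) (f : ℝ → ℝ) : ℝ → ℝ := fun t => deriv f t - μ * f t

/-- auxiliary: `Φ_{(μ0,μ1)} (t - e)` as a function of `t`. -/
noncomputable def PP (μ0 μ1 e : ℝ) : ℝ → ℝ :=
  fun t => (Real.exp (μ1 * (t - e)) - Real.exp (μ0 * (t - e))) / (μ1 - μ0)

/-- first derivative of `PP`. -/
noncomputable def PP1 (μ0 μ1 e : ℝ) : ℝ → ℝ :=
  fun t => (μ1 * Real.exp (μ1 * (t - e)) - μ0 * Real.exp (μ0 * (t - e))) / (μ1 - μ0)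

/-- second derivative of `PP`. -/
noncomputable def PP2 (μ0 μ1 e : ℝ) : ℝ → ℝ :=
  fun t => (μ1 * (μ1 * Real.exp (μ1 * (t - e))) - μ0 * (μ0 * Real.exp (μ0 * (t - e)))) / (μ1 - μ0)

lemma hasDerivAt_explin (c e t : ℝ) :
    HasDerivAt (fun s => Real.exp (c * (s - e))) (c * Real.exp (c * (t - e))) t := by
  simpa [mul_comm] using (((hasDerivAt_id t).sub_const e).const_mul c).exp

lemma hasDerivAt_PP (μ0 μ1 e t : ℝ) : HasDerivAt (PP μ0 μ1 e) (PP1 μ0 μ1 e t) t :=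
  ((hasDerivAt_explin μ1 e t).sub (hasDerivAt_explin μ0 e t)).div_const _

lemma hasDerivAt_PP1 (μ0 μ1 e t : ℝ) : HasDerivAt (PP1 μ0 μ1 e) (PP2 μ0 μ1 e t) t :=
  (((hasDerivAt_explin μ1 e t).const_mul μ1).sub
    ((hasDerivAt_explin μ0 e t).const_mul μ0)).div_const _

set_option maxHeartbeats 1000000 in
lemma part1_ident (l0 l1 a b t : ℝ) (hd : l1 - l0 ≠ 0) :
    (Real.exp (l1 * (t - b)) - Real.exp (l0 * (t - b))) / (l1 - l0) *
        ((Real.exp (l1 * (t - a)) - Real.exp (l0 * (t - a))) / (l1 - l0)) *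
        ((Real.exp (-l1 * (b - a)) - Real.exp (-l0 * (b - a))) / (-l1 - -l0)) =
      (Real.exp (l1 * (t - b)) - Real.exp (l0 * (t - b))) / (l1 - l0) *
        ((Real.exp (-l1 * (t - a)) - Real.exp (-l0 * (t - a))) / (-l1 - -l0)) *
        ((Real.exp (l1 * (t - a) + l0 * (t - b)) - Real.exp (l0 * (t - a) + l1 * (t - b))) /
          (l1 - l0)) := by
  rw [show -l1 - -l0 = -(l1 - l0) by ring]
  obtain ⟨d, hdd, hdne⟩ : ∃ d : ℝ, l1 - l0 = d ∧ d ≠ 0 := ⟨l1 - l0, rfl, hd⟩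
  rw [hdd]
  simp only [neg_mul, mul_sub, Real.exp_neg, Real.exp_sub, Real.exp_add]
  field_simp
  ring

set_option maxHeartbeats 1000000 in
lemma part2_ident (l0 l1 a b t : ℝ) (hd : l1 - l0 ≠ 0) :
    ((PP2 l0 l1 b t * PP (-l0) (-l1) a t + PP1 l0 l1 b t * PP1 (-l0) (-l1) a t)
      + (PP1 l0 l1 b t * PP1 (-l0) (-l1) a t + PP l0 l1 b t * PP2 (-l0) (-l1) a t))
      - (l1 - l0) * (PP1 l0 l1 b t * PP (-l0) (-l1) a t + PP l0 l1 b t * PP1 (-l0) (-l1) a t)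
      - (l0 - l1) * ((PP1 l0 l1 b t * PP (-l0) (-l1) a t + PP l0 l1 b t * PP1 (-l0) (-l1) a t)
          - (l1 - l0) * (PP l0 l1 b t * PP (-l0) (-l1) a t))
      = Real.exp (l1 * (a - b)) + Real.exp (l0 * (a - b)) := by
  obtain ⟨d, hd0, rfl⟩ : ∃ d : ℝ, d ≠ 0 ∧ l1 = l0 + d := ⟨l1 - l0, hd, by ring⟩
  unfold PP PP1 PP2
  rw [show l0 + d - l0 = d by ring, show -(l0 + d) - -l0 = -d by ring]
  simp only [neg_mul, mul_sub, Real.exp_neg, Real.exp_sub]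
  field_simp
  ring

set_option maxHeartbeats 1000000 in
theorem stmt_10 (l0 l1 a b : ℝ) (h0 : l0 < 0) (h1 : 0 < l1) (hab : a < b) :
    let Φ : ℝ → ℝ := fun t => (Real.exp (l1 * t) - Real.exp (l0 * t)) / (l1 - l0)
    let Φneg : ℝ → ℝ := fun t => (Real.exp (-l1 * t) - Real.exp (-l0 * t)) / (-l1 - -l0)
    let f : ℝ → ℝ := fun t => Φ (t - a)
    let g : ℝ → ℝ := fun t => Φ (t - b)
    let w : ℝ → ℝ := fun t => f t * deriv g t - deriv f t * g t
    let Gdiag : ℝ → ℝ := fun t => g t * f t / w t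
    let F : ℝ → ℝ := fun t => Φ (t - b) * Φneg (t - a)
    (∀ t : ℝ, Gdiag t = Φ (t - b) * Φneg (t - a) / Φneg (b - a)) ∧
    (∀ t : ℝ, Dop (l0 - l1) (Dop (l1 - l0) F) t
        = Real.exp (l1 * (a - b)) + Real.exp (l0 * (a - b))) := by
  intro Φ Φneg f g w Gdiag F
  have hd : l1 - l0 ≠ 0 := by linarith
  have hd' : -l1 - -l0 ≠ 0 := by intro h; apply hd; linarith
  have hderivf : ∀ t, deriv f t = PP1 l0 l1 a t := fun t => (hasDerivAt_PP l0 l1 a t).deriv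
  have hderivg : ∀ t, deriv g t = PP1 l0 l1 b t := fun t => (hasDerivAt_PP l0 l1 b t).deriv
  constructor
  · intro t
    have hw : w t = (Real.exp (l1 * (t - a) + l0 * (t - b))
        - Real.exp (l0 * (t - a) + l1 * (t - b))) / (l1 - l0) := by
      show f t * deriv g t - deriv f t * g t = _
      rw [hderivf, hderivg]
      show PP l0 l1 a t * PP1 l0 l1 b t - PP1 l0 l1 a t * PP l0 l1 b t = _
      unfold PP PP1
      rw [Real.exp_add, Real.exp_add]
      field_simp [hd]
      ring
    have hwne : w t ≠ 0 := by
      rw [hw]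
      apply div_ne_zero _ hd
      rw [sub_ne_zero]
      intro h
      rw [Real.exp_eq_exp] at h
      apply hd
      nlinarith [h]
    have hΦne : Φneg (b - a) ≠ 0 := by
      show (Real.exp (-l1 * (b - a)) - Real.exp (-l0 * (b - a))) / (-l1 - -l0) ≠ 0
      apply div_ne_zero _ hd'
      rw [sub_ne_zero]
      intro h
      rw [Real.exp_eq_exp] at h
      apply hd
      nlinarith [h]
    show g t * f t / w t = Φ (t - b) * Φneg (t - a) / Φneg (b - a)
    rw [div_eq_div_iff hwne hΦne, hw]
    show (Real.exp (l1 * (t - b)) - Real.exp (l0 * (t - b))) / (l1 - l0) *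
        ((Real.exp (l1 * (t - a)) - Real.exp (l0 * (t - a))) / (l1 - l0)) *
        ((Real.exp (-l1 * (b - a)) - Real.exp (-l0 * (b - a))) / (-l1 - -l0)) =
      (Real.exp (l1 * (t - b)) - Real.exp (l0 * (t - b))) / (l1 - l0) *
        ((Real.exp (-l1 * (t - a)) - Real.exp (-l0 * (t - a))) / (-l1 - -l0)) *
        ((Real.exp (l1 * (t - a) + l0 * (t - b)) - Real.exp (l0 * (t - a) + l1 * (t - b))) /
          (l1 - l0))
    exact part1_ident l0 l1 a b t hd
  · intro t
    have hF' : ∀ s, HasDerivAt F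
        (PP1 l0 l1 b s * PP (-l0) (-l1) a s + PP l0 l1 b s * PP1 (-l0) (-l1) a s) s := fun s =>
      (hasDerivAt_PP l0 l1 b s).mul (hasDerivAt_PP (-l0) (-l1) a s)
    have e1 : Dop (l1 - l0) F = fun s =>
        (PP1 l0 l1 b s * PP (-l0) (-l1) a s + PP l0 l1 b s * PP1 (-l0) (-l1) a s)
          - (l1 - l0) * (PP l0 l1 b s * PP (-l0) (-l1) a s) := by
      funext s
      show deriv F s - (l1 - l0) * F s = _
      rw [(hF' s).deriv]
      rfl
    rw [e1]
    have hD2 : HasDerivAt (fun s =>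
        (PP1 l0 l1 b s * PP (-l0) (-l1) a s + PP l0 l1 b s * PP1 (-l0) (-l1) a s)
          - (l1 - l0) * (PP l0 l1 b s * PP (-l0) (-l1) a s))
        (((PP2 l0 l1 b t * PP (-l0) (-l1) a t + PP1 l0 l1 b t * PP1 (-l0) (-l1) a t)
          + (PP1 l0 l1 b t * PP1 (-l0) (-l1) a t + PP l0 l1 b t * PP2 (-l0) (-l1) a t))
          - (l1 - l0) * (PP1 l0 l1 b t * PP (-l0) (-l1) a t
            + PP l0 l1 b t * PP1 (-l0) (-l1) a t)) t :=
      (((hasDerivAt_PP1 l0 l1 b t).mul (hasDerivAt_PP (-l0) (-l1) a t)).add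
        ((hasDerivAt_PP l0 l1 b t).mul (hasDerivAt_PP1 (-l0) (-l1) a t))).sub
        (((hasDerivAt_PP l0 l1 b t).mul (hasDerivAt_PP (-l0) (-l1) a t)).const_mul (l1 - l0))
    show deriv _ t - (l0 - l1) * _ = _
    rw [hD2.deriv]
    exact part2_ident l0 l1 a b t hd
end

section
/- For real λ₀ ≠ λ₁ with λ₀+λ₁ ≠ 0, 2λ₀ ≠ 0, 2λ₁ ≠ 0 pairwise distinct from each other and 0, and any h > 0: ∫₀ʰ Φ_{(λ₀,λ₁)}(t)² dt = 2·Φ_{(2λ₀,2λ₁,λ₀+λ₁,0)}(h), where Φ_{(2λ₀,2λ₁,λ₀+λ₁,0)} is the unique exponential polynomial with frequencies 2λ₀, 2λ₁, λ₀+λ₁, 0 vanishing to order 3 at 0 with third derivative 1 at 0. -/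
/-! Expanding the square, `(e^{λ₁t} - e^{λ₀t})²` is a combination of `e^{2λ₁t}`, `e^{(λ₀+λ₁)t}`
and `e^{2λ₀t}`, so its integral over `[0, h]` is a combination of these exponentials at `h`
together with a constant, i.e. of the exponentials with frequencies `2λ₀, 2λ₁, λ₀+λ₁, 0`.
Comparing coefficients with the partial-fraction form of `fundPhi` for these four frequencies
shows that they agree up to the factor `2`. -/

open Real Finset

noncomputable def fundPhi {N : ℕ} (μ : Fin N → ℝ) (t : ℝ) : ℝ :=
  ∑ j, Real.exp (μ j * t) / ∏ k ∈ Finset.univ.erase j, (μ j - μ k)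

theorem fundPhi_fin_four (μ : Fin 4 → ℝ) (t : ℝ) :
    fundPhi μ t =
      exp (μ 0 * t) / ((μ 0 - μ 1) * (μ 0 - μ 2) * (μ 0 - μ 3))
      + exp (μ 1 * t) / ((μ 1 - μ 0) * (μ 1 - μ 2) * (μ 1 - μ 3))
      + exp (μ 2 * t) / ((μ 2 - μ 0) * (μ 2 - μ 1) * (μ 2 - μ 3))
      + exp (μ 3 * t) / ((μ 3 - μ 0) * (μ 3 - μ 1) * (μ 3 - μ 2)) := by
  have erase_zero : univ.erase (0 : Fin 4) = {1, 2, 3} := by decide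
  have erase_one : univ.erase (1 : Fin 4) = {0, 2, 3} := by decide
  have erase_two : univ.erase (2 : Fin 4) = {0, 1, 3} := by decide
  have erase_three : univ.erase (3 : Fin 4) = {0, 1, 2} := by decide
  simp [fundPhi, Fin.sum_univ_four, erase_zero, erase_one, erase_two, erase_three, mul_assoc]

theorem integral_exp_mul {c : ℝ} (hc : c ≠ 0) (a b : ℝ) :
    ∫ t in a..b, exp (c * t) = (exp (c * b) - exp (c * a)) / c := by
  rw [intervalIntegral.integral_comp_mul_left exp hc, integral_exp, smul_eq_mul, inv_mul_eq_div]

theorem integral_sq_exp_sub_exp {a b : ℝ} (ha : a ≠ 0) (hb : b ≠ 0) (hab : a + b ≠ 0)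
    (x y : ℝ) :
    ∫ t in x..y, (exp (b * t) - exp (a * t)) ^ 2 =
      (exp (2 * b * y) - exp (2 * b * x)) / (2 * b)
      - 2 * ((exp ((a + b) * y) - exp ((a + b) * x)) / (a + b))
      + (exp (2 * a * y) - exp (2 * a * x)) / (2 * a) := by
  have expand : ∀ t, (exp (b * t) - exp (a * t)) ^ 2 =
      exp (2 * b * t) - 2 * exp ((a + b) * t) + exp (2 * a * t) := by
    intro t
    rw [show 2 * b * t = b * t + b * t by ring, show (a + b) * t = a * t + b * t by ring,
      show 2 * a * t = a * t + a * t by ring, exp_add, exp_add, exp_add]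
    ring
  have integrable (c : ℝ) : IntervalIntegrable (fun t => exp (c * t)) MeasureTheory.volume x y :=
    (by fun_prop : Continuous fun t => exp (c * t)).intervalIntegrable x y
  simp_rw [expand]
  rw [intervalIntegral.integral_add ((integrable _).sub ((integrable _).const_mul 2))
      (integrable _),
    intervalIntegral.integral_sub (integrable _) ((integrable _).const_mul 2),
    intervalIntegral.integral_const_mul, integral_exp_mul (mul_ne_zero two_ne_zero hb),
    integral_exp_mul hab, integral_exp_mul (mul_ne_zero two_ne_zero ha)]

theorem stmt_12_general (l0 l1 h : ℝ)
    (hμ : Function.Injective ![2 * l0, 2 * l1, l0 + l1, (0 : ℝ)]) :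
    ∫ t in (0 : ℝ)..h, ((Real.exp (l1 * t) - Real.exp (l0 * t)) / (l1 - l0)) ^ 2
      = 2 * fundPhi ![2 * l0, 2 * l1, l0 + l1, (0 : ℝ)] h := by
  have h0 : l0 ≠ 0 := by simpa using hμ.ne (show (0 : Fin 4) ≠ 3 by decide)
  have h1 : l1 ≠ 0 := by simpa using hμ.ne (show (1 : Fin 4) ≠ 3 by decide)
  have h01 : l0 + l1 ≠ 0 := by simpa using hμ.ne (show (2 : Fin 4) ≠ 3 by decide)
  have hd : l1 - l0 ≠ 0 := by
    simpa [sub_eq_zero, eq_comm] using hμ.ne (show (0 : Fin 4) ≠ 1 by decide)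
  simp_rw [div_pow]
  rw [intervalIntegral.integral_div, integral_sq_exp_sub_exp h0 h1 h01, fundPhi_fin_four]
  simp only [Matrix.cons_val_zero, Matrix.cons_val_one, Matrix.cons_val_two,
    Matrix.cons_val_three, Matrix.head_cons, Matrix.tail_cons]
  rw [show (2 * l0 - 2 * l1) * (2 * l0 - (l0 + l1)) * (2 * l0 - 0) = 4 * l0 * (l1 - l0) ^ 2
      by ring,
    show (2 * l1 - 2 * l0) * (2 * l1 - (l0 + l1)) * (2 * l1 - 0) = 4 * l1 * (l1 - l0) ^ 2
      by ring,
    show (l0 + l1 - 2 * l0) * (l0 + l1 - 2 * l1) * (l0 + l1 - 0) = -((l1 - l0) ^ 2 * (l0 + l1))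
      by ring,
    show (0 - 2 * l0) * (0 - 2 * l1) * (0 - (l0 + l1)) = -(4 * l0 * l1 * (l0 + l1)) by ring]
  simp only [mul_zero, zero_mul, exp_zero]
  field_simp
  ring

theorem stmt_12 (l0 l1 h : ℝ) (hh : 0 < h)
    (hμ : Function.Injective ![2 * l0, 2 * l1, l0 + l1, (0 : ℝ)]) :
    ∫ t in (0 : ℝ)..h, ((Real.exp (l1 * t) - Real.exp (l0 * t)) / (l1 - l0)) ^ 2
      = 2 * fundPhi ![2 * l0, 2 * l1, l0 + l1, (0 : ℝ)] h :=
  stmt_12_general l0 l1 h hμ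
end

section
/- (Convolution identity for fundamental functions.) Let λ₀,...,λ_{n+m} be pairwise distinct complex numbers. Then for all y, ∫₀ʸ Φ_{(λ₀,...,λₙ)}(t) · Φ_{(λ_{n+1},...,λ_{n+m})}(y-t) dt = Φ_{(λ₀,...,λ_{n+m})}(y), where Φ_{(μ₀,...,μ_N)}(t) = (1/2πi)∮ e^{tz}/((z-μ₀)···(z-μ_N)) dz is the fundamental exponential polynomial. -/
/-!
Write `Φ_μ(t) = ∑ⱼ wⱼ(μ) e^{μⱼ t}` with the barycentric (nodal) weights
`wⱼ(μ) = ∏_{k ≠ j} (μⱼ - μₖ)⁻¹`. Convolving two exponentials gives the divided difference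
`(e^{a y} - e^{b y}) / (a - b)`, so the convolution is a combination of the `e^{aⱼ y}` and
`e^{bₖ y}`. The coefficient of `e^{aⱼ y}` is `wⱼ(a) ∑ₖ wₖ(b) / (aⱼ - bₖ) = wⱼ(a) / ∏ₖ (aⱼ - bₖ)`
by the partial-fraction expansion of `1 / ∏ₖ (x - bₖ)`, and this is exactly the weight of `aⱼ`
among all the frequencies; symmetrically for `bₖ`.
-/
open Complex Finset

/-- The fundamental exponential polynomial for pairwise distinct complex frequencies. -/
noncomputable def fundPhiC {N : ℕ} (μ : Fin N → ℂ) (t : ℝ) : ℂ :=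
  ∑ j, Complex.exp (μ j * t) / ∏ k ∈ Finset.univ.erase j, (μ j - μ k)

open Lagrange Polynomial

theorem Lagrange.sum_nodalWeight_mul_inv_sub {F ι : Type*} [Field F] [DecidableEq ι]
    {s : Finset ι} {v : ι → F} {x : F} (hvs : Set.InjOn v s) (hs : s.Nonempty)
    (hx : ∀ i ∈ s, x ≠ v i) :
    ∑ i ∈ s, nodalWeight s v i * (x - v i)⁻¹ = (eval x (nodal s v))⁻¹ := by
  refine (eq_inv_of_mul_eq_one_right ?_)
  simpa only [Pi.one_apply, interpolate_one hvs hs, eval_one, mul_one] using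
    (eval_interpolate_not_at_node 1 hx).symm

theorem Fin.castAdd_ne_natAdd {p q : ℕ} (i : Fin p) (k : Fin q) :
    Fin.castAdd q i ≠ Fin.natAdd p k :=
  Fin.ne_of_lt (by simp only [Fin.lt_def, Fin.val_castAdd, Fin.val_natAdd]; omega)

theorem Fin.prod_erase_castAdd {M : Type*} [CommMonoid M] {p q : ℕ} (f : Fin (p + q) → M)
    (j : Fin p) :
    ∏ r ∈ univ.erase (Fin.castAdd q j), f r
      = (∏ i ∈ univ.erase j, f (Fin.castAdd q i)) * ∏ i, f (Fin.natAdd p i) := by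
  simp only [← filter_ne', prod_filter, Fin.prod_univ_add, Fin.castAdd_inj,
    ne_comm, Fin.castAdd_ne_natAdd, ne_eq, not_false_eq_true, if_true]

theorem Fin.prod_erase_natAdd {M : Type*} [CommMonoid M] {p q : ℕ} (f : Fin (p + q) → M)
    (k : Fin q) :
    ∏ r ∈ univ.erase (Fin.natAdd p k), f r
      = (∏ i, f (Fin.castAdd q i)) * ∏ i ∈ univ.erase k, f (Fin.natAdd p i) := by
  simp only [← filter_ne', prod_filter, Fin.prod_univ_add, Fin.natAdd_inj,
    Fin.castAdd_ne_natAdd, ne_eq, not_false_eq_true, if_true]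

theorem Lagrange.nodalWeight_castAdd {F : Type*} [Field F] {p q : ℕ} (μ : Fin (p + q) → F)
    (j : Fin p) :
    nodalWeight univ μ (Fin.castAdd q j)
      = nodalWeight univ (fun i => μ (Fin.castAdd q i)) j
        * (eval (μ (Fin.castAdd q j)) (nodal univ fun k => μ (Fin.natAdd p k)))⁻¹ := by
  rw [nodalWeight, Fin.prod_erase_castAdd, nodalWeight, eval_nodal, ← prod_inv_distrib]

theorem Lagrange.nodalWeight_natAdd {F : Type*} [Field F] {p q : ℕ} (μ : Fin (p + q) → F)
    (k : Fin q) :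
    nodalWeight univ μ (Fin.natAdd p k)
      = nodalWeight univ (fun i => μ (Fin.natAdd p i)) k
        * (eval (μ (Fin.natAdd p k)) (nodal univ fun j => μ (Fin.castAdd q j)))⁻¹ := by
  rw [nodalWeight, Fin.prod_erase_natAdd, nodalWeight, eval_nodal, ← prod_inv_distrib,
    mul_comm]

theorem sum_sum_mul_mul_div_sub {ι κ F : Type*} [Fintype ι] [Fintype κ] [Field F]
    (u a E : ι → F) (w b G : κ → F) (hab : ∀ j k, a j ≠ b k) :
    ∑ j, ∑ k, u j * w k * ((E j - G k) / (a j - b k))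
      = ∑ j, u j * (∑ k, w k * (a j - b k)⁻¹) * E j
        + ∑ k, w k * (∑ j, u j * (b k - a j)⁻¹) * G k := by
  have hsplit (j : ι) (k : κ) :
      (E j - G k) / (a j - b k) = E j * (a j - b k)⁻¹ + G k * (b k - a j)⁻¹ := by
    have := sub_ne_zero.mpr (hab j k)
    have := sub_ne_zero.mpr (hab j k).symm
    field_simp
    ring
  simp only [hsplit, mul_add, sum_add_distrib, mul_sum, sum_mul]
  rw [sum_comm (f := fun j k => u j * w k * (G k * (b k - a j)⁻¹))]
  congr 1 <;> refine sum_congr rfl fun _ _ => sum_congr rfl fun _ _ => by ring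

theorem fundPhiC_eq_sum_nodalWeight {N : ℕ} (μ : Fin N → ℂ) (t : ℝ) :
    fundPhiC μ t = ∑ j, nodalWeight univ μ j * exp (μ j * t) := by
  simp only [fundPhiC, nodalWeight, div_eq_mul_inv, prod_inv_distrib, mul_comm]

theorem integral_exp_mul_mul_exp_mul_sub {a b : ℂ} (hab : a ≠ b) (y : ℝ) :
    ∫ t in (0 : ℝ)..y, exp (a * t) * exp (b * ↑(y - t))
      = (exp (a * y) - exp (b * y)) / (a - b) := by
  have hexp (t : ℝ) : exp (a * t) * exp (b * ↑(y - t)) = exp (b * y) * exp ((a - b) * t) := by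
    rw [← Complex.exp_add, ← Complex.exp_add]
    push_cast
    ring_nf
  rw [intervalIntegral.integral_congr fun t _ => hexp t, intervalIntegral.integral_const_mul,
    integral_exp_mul_complex (sub_ne_zero.mpr hab), ofReal_zero, mul_zero, Complex.exp_zero,
    mul_div_assoc', mul_sub, mul_one, ← Complex.exp_add]
  ring_nf

theorem integral_fundPhiC_mul_fundPhiC_sub {p q : ℕ} (a : Fin p → ℂ) (b : Fin q → ℂ)
    (hab : ∀ j k, a j ≠ b k) (y : ℝ) :
    ∫ t in (0 : ℝ)..y, fundPhiC a t * fundPhiC b (y - t)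
      = ∑ j, ∑ k, nodalWeight univ a j * nodalWeight univ b k
          * ((exp (a j * y) - exp (b k * y)) / (a j - b k)) := by
  simp only [fundPhiC_eq_sum_nodalWeight, sum_mul_sum]
  rw [intervalIntegral.integral_finsetSum fun j _ => ?_]
  · refine sum_congr rfl fun j _ => ?_
    rw [intervalIntegral.integral_finsetSum fun k _ => ?_]
    · refine sum_congr rfl fun k _ => ?_
      rw [← integral_exp_mul_mul_exp_mul_sub (hab j k), ← intervalIntegral.integral_const_mul]
      exact intervalIntegral.integral_congr fun t _ => by ring
    · exact Continuous.intervalIntegrable (by fun_prop) _ _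
  · exact Continuous.intervalIntegrable (by fun_prop) _ _

theorem stmt_13 (n m : ℕ) (hm : 0 < m) (μ : Fin (n + 1 + m) → ℂ)
    (hinj : Function.Injective μ) (y : ℝ) :
    ∫ t in (0 : ℝ)..y,
        fundPhiC (fun i : Fin (n + 1) => μ (Fin.castAdd m i)) t *
          fundPhiC (fun i : Fin m => μ (Fin.natAdd (n + 1) i)) (y - t)
      = fundPhiC μ y := by
  set a : Fin (n + 1) → ℂ := fun i => μ (Fin.castAdd m i)
  set b : Fin m → ℂ := fun k => μ (Fin.natAdd (n + 1) k)
  have ha : Function.Injective a := hinj.comp (Fin.castAdd_injective _ _)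
  have hb : Function.Injective b := hinj.comp (Fin.natAdd_injective _ _)
  have hab (j k) : a j ≠ b k := hinj.ne (Fin.castAdd_ne_natAdd j k)
  have : Nonempty (Fin m) := ⟨⟨0, hm⟩⟩
  rw [integral_fundPhiC_mul_fundPhiC_sub a b hab, sum_sum_mul_mul_div_sub _ _ _ _ _ _ hab,
    fundPhiC_eq_sum_nodalWeight μ, Fin.sum_univ_add (a := n + 1) (b := m)]
  simp only [nodalWeight_castAdd, nodalWeight_natAdd,
    sum_nodalWeight_mul_inv_sub hb.injOn univ_nonempty fun k _ => hab _ k,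
    sum_nodalWeight_mul_inv_sub ha.injOn univ_nonempty fun j _ => (hab j _).symm]
  rfl
end

section
/- For all real t ≠ 0, the inequality 4(t cosh t - sinh t) ≤ sinh(2t) - 2t holds when t > 0, and equivalently 0 ≤ (t cosh t - sinh t)/(sinh(2t) - 2t)·4 ≤ 1 for all t > 0. (That is, 4(t cosh t − sinh t)/(sinh 2t − 2t) ≤ 1.) -/
/-!
Both `t ↦ t cosh t - sinh t` and `t ↦ sinh 2t - 2t - 4 (t cosh t - sinh t)` vanish at `0`
and have derivatives `t sinh t` and `4 sinh t (sinh t - t)`, which are nonnegative for `t ≥ 0`.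
Hence both are nonnegative on `[0, ∞)`, and `sinh 2t - 2t > 0` for `t > 0` turns this into the
bounds on the quotient.
-/

open Real Set

theorem monotoneOn_Ici_of_hasDerivAt_nonneg {f f' : ℝ → ℝ} {a : ℝ}
    (hf : ∀ x, HasDerivAt f (f' x) x) (hf' : ∀ x, a < x → 0 ≤ f' x) :
    MonotoneOn f (Ici a) :=
  monotoneOn_of_hasDerivWithinAt_nonneg (convex_Ici a)
    (fun x _ => (hf x).continuousAt.continuousWithinAt) (fun x _ => (hf x).hasDerivWithinAt)
    (fun x hx => hf' x (by rwa [interior_Ici] at hx))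

theorem Real.hasDerivAt_mul_cosh_sub_sinh (x : ℝ) :
    HasDerivAt (fun t => t * cosh t - sinh t) (x * sinh x) x := by
  refine (((hasDerivAt_id x).mul (hasDerivAt_cosh x)).sub (hasDerivAt_sinh x)).congr_deriv ?_
  simp only [id, one_mul]
  ring

theorem Real.mul_cosh_sub_sinh_nonneg {x : ℝ} (hx : 0 ≤ x) : 0 ≤ x * cosh x - sinh x := by
  have hmono := monotoneOn_Ici_of_hasDerivAt_nonneg hasDerivAt_mul_cosh_sub_sinh
    fun y hy => mul_nonneg hy.le (sinh_nonneg_iff.2 hy.le)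
  simpa using hmono self_mem_Ici hx hx

theorem Real.hasDerivAt_sinh_two_mul_sub_sub_four_mul (x : ℝ) :
    HasDerivAt (fun t => sinh (2 * t) - 2 * t - 4 * (t * cosh t - sinh t))
      (4 * sinh x * (sinh x - x)) x := by
  have hsinh : HasDerivAt (fun t => sinh (2 * t)) (cosh (2 * x) * 2) x :=
    (hasDerivAt_sinh (2 * x)).comp x ((hasDerivAt_id x).const_mul 2 |>.congr_deriv (mul_one 2))
  refine ((hsinh.sub ((hasDerivAt_id x).const_mul 2)).sub
    ((hasDerivAt_mul_cosh_sub_sinh x).const_mul 4)).congr_deriv ?_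
  rw [cosh_two_mul, cosh_sq]
  ring

theorem Real.four_mul_mul_cosh_sub_sinh_le {x : ℝ} (hx : 0 ≤ x) :
    4 * (x * cosh x - sinh x) ≤ sinh (2 * x) - 2 * x := by
  have hmono := monotoneOn_Ici_of_hasDerivAt_nonneg hasDerivAt_sinh_two_mul_sub_sub_four_mul
    fun y hy => mul_nonneg (mul_nonneg zero_le_four (sinh_nonneg_iff.2 hy.le))
      (sub_nonneg.2 (self_le_sinh_iff.2 hy.le))
  have hgap := hmono self_mem_Ici hx hx
  simp only [mul_zero, sinh_zero, zero_mul, sub_zero] at hgap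
  linarith

theorem stmt_15 (t : ℝ) (ht : 0 < t) :
    4 * (t * Real.cosh t - Real.sinh t) ≤ Real.sinh (2 * t) - 2 * t ∧
    0 ≤ 4 * (t * Real.cosh t - Real.sinh t) / (Real.sinh (2 * t) - 2 * t) ∧
    4 * (t * Real.cosh t - Real.sinh t) / (Real.sinh (2 * t) - 2 * t) ≤ 1 := by
  have hle := four_mul_mul_cosh_sub_sinh_le ht.le
  have hden : 0 < sinh (2 * t) - 2 * t := sub_pos.2 (self_lt_sinh_iff.2 (by positivity))
  refine ⟨hle, div_nonneg ?_ hden.le, (div_le_one hden).2 hle⟩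
  exact mul_nonneg zero_le_four (mul_cosh_sub_sinh_nonneg ht.le)
end
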